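/- arXiv:2407.21542 — 2 statements merged into one kernel-verified Lean document; each statement's English description precedes it below -/
import Mathlib

section
/- For the family of triangular distributions on [a,b] with mode m, whose density is q_m(x) = 2(x-a)/((b-a)(m-a)) for x in [a,m] and 2(b-x)/((b-a)(b-m)) for x in (m,b], the Fisher information at parameter m ∈ (a,b) equals 1/((m-a)(b-m)). -/
/-!
Away from the mode the density depends on `m` only through a factor `1 / (m - a)` (for `x < m`)
or `1 / (b - m)` (for `x > m`), so the score is the constant `-1 / (m - a)` to the left of the mode
and `1 / (b - m)` to the right. The Fisher information is therefore
`(m - a)⁻² P(X < m) + (b - m)⁻² P(X > m)` with `P(X < m) = (m - a) / (b - a)` and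
`P(X > m) = (b - m) / (b - a)`, which sums to `1 / ((m - a) * (b - m))`.
-/

open Real MeasureTheory

/-- Triangular density on `[a,b]` with mode `m`. -/
noncomputable def triangularDensity (a b m x : ℝ) : ℝ :=
  if x ≤ m then 2 * (x - a) / ((b - a) * (m - a))
  else 2 * (b - x) / ((b - a) * (b - m))

open Set Filter Topology intervalIntegral

lemma hasDerivAt_log_const_div {c s : ℝ} (hc : c ≠ 0) (hs : s ≠ 0) :
    HasDerivAt (fun t => log (c / t)) (-s⁻¹) s := by
  have hlog : (fun t => log c - log t) =ᶠ[𝓝 s] fun t => log (c / t) := by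
    filter_upwards [isOpen_ne.mem_nhds hs] with t ht
    rw [log_div hc ht]
  simpa using ((hasDerivAt_const s (log c)).sub (hasDerivAt_log hs)).congr_of_eventuallyEq
    hlog.symm

lemma integral_eq_add_of_eqOn_Ioo {f L R : ℝ → ℝ} {a m b : ℝ} (ham : a ≤ m)
    (hmb : m ≤ b) (hL : EqOn f L (Ioo a m)) (hR : EqOn f R (Ioo m b)) (hLc : Continuous L)
    (hRc : Continuous R) :
    ∫ x in a..b, f x = (∫ x in a..m, L x) + ∫ x in m..b, R x := by
  rw [← uIoo_of_le ham] at hL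
  rw [← uIoo_of_le hmb] at hR
  rw [← integral_add_adjacent_intervals ((hLc.intervalIntegrable a m).congr_uIoo hL.symm)
    ((hRc.intervalIntegrable m b).congr_uIoo hR.symm), integral_congr_uIoo hL,
    integral_congr_uIoo hR]

lemma integral_sub_left_endpoint (a b : ℝ) : ∫ x in a..b, (x - a) = (b - a) ^ 2 / 2 := by
  rw [integral_comp_sub_right (fun x => x)]
  simp

lemma integral_right_endpoint_sub (a b : ℝ) : ∫ x in a..b, (b - x) = (b - a) ^ 2 / 2 := by
  rw [integral_comp_sub_left (fun x => x)]
  simp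

section triangular

variable {a b m x : ℝ}

lemma triangularDensity_eventuallyEq_of_lt (hxm : x < m) :
    (triangularDensity a b · x) =ᶠ[𝓝 m] fun m' => 2 * (x - a) / (b - a) / (m' - a) := by
  filter_upwards [Ioi_mem_nhds hxm] with m' hm'
  rw [triangularDensity, if_pos (le_of_lt hm'), div_div]

lemma triangularDensity_eventuallyEq_of_gt (hmx : m < x) :
    (triangularDensity a b · x) =ᶠ[𝓝 m] fun m' => 2 * (b - x) / (b - a) / (b - m') := by
  filter_upwards [Iio_mem_nhds hmx] with m' hm'
  rw [triangularDensity, if_neg (not_le.mpr hm'), div_div]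

lemma deriv_log_triangularDensity_of_lt (hab : a < b) (hx : x ∈ Ioo a m) :
    deriv (fun m' => log (triangularDensity a b m' x)) m = -(m - a)⁻¹ := by
  have hc : 2 * (x - a) / (b - a) ≠ 0 := by
    have := sub_pos.mpr hx.1; have := sub_pos.mpr hab; positivity
  have hderiv := (hasDerivAt_log_const_div hc (sub_pos.mpr (hx.1.trans hx.2)).ne').comp m
    ((hasDerivAt_id m).sub_const a)
  have hev : (fun m' => log (triangularDensity a b m' x)) =ᶠ[𝓝 m]
      fun m' => log (2 * (x - a) / (b - a) / (m' - a)) :=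
    (triangularDensity_eventuallyEq_of_lt hx.2).fun_comp log
  rw [hev.deriv_eq]
  simpa [Function.comp_def] using hderiv.deriv

lemma deriv_log_triangularDensity_of_gt (hab : a < b) (hx : x ∈ Ioo m b) :
    deriv (fun m' => log (triangularDensity a b m' x)) m = (b - m)⁻¹ := by
  have hc : 2 * (b - x) / (b - a) ≠ 0 := by
    have := sub_pos.mpr hx.2; have := sub_pos.mpr hab; positivity
  have hderiv := (hasDerivAt_log_const_div hc (sub_pos.mpr (hx.1.trans hx.2)).ne').comp m
    ((hasDerivAt_const m b).sub (hasDerivAt_id m))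
  have hev : (fun m' => log (triangularDensity a b m' x)) =ᶠ[𝓝 m]
      fun m' => log (2 * (b - x) / (b - a) / (b - m')) :=
    (triangularDensity_eventuallyEq_of_gt hx.1).fun_comp log
  rw [hev.deriv_eq]
  simpa [Function.comp_def] using hderiv.deriv

end triangular

theorem fisher_info_triangular_general (a b m : ℝ) (ham : a < m) (hmb : m < b) :
    ∫ x in a..b,
        (deriv (fun m' => Real.log (triangularDensity a b m' x)) m) ^ 2
          * triangularDensity a b m x
      = 1 / ((m - a) * (b - m)) := by
  have hab : a < b := ham.trans hmb
  have hL : EqOn (fun x => (deriv (fun m' => log (triangularDensity a b m' x)) m) ^ 2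
      * triangularDensity a b m x) (fun x => 2 / ((b - a) * (m - a) ^ 3) * (x - a))
      (Ioo a m) := by
    intro x hx
    dsimp only
    rw [deriv_log_triangularDensity_of_lt hab hx, triangularDensity, if_pos hx.2.le]
    field_simp
  have hR : EqOn (fun x => (deriv (fun m' => log (triangularDensity a b m' x)) m) ^ 2
      * triangularDensity a b m x) (fun x => 2 / ((b - a) * (b - m) ^ 3) * (b - x))
      (Ioo m b) := by
    intro x hx
    dsimp only
    rw [deriv_log_triangularDensity_of_gt hab hx, triangularDensity, if_neg (not_le.mpr hx.1)]
    field_simp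
  rw [integral_eq_add_of_eqOn_Ioo ham.le hmb.le hL hR (by fun_prop) (by fun_prop),
    intervalIntegral.integral_const_mul, intervalIntegral.integral_const_mul,
    integral_sub_left_endpoint, integral_right_endpoint_sub]
  have hma : m - a ≠ 0 := (sub_pos.mpr ham).ne'
  have hbm : b - m ≠ 0 := (sub_pos.mpr hmb).ne'
  have hba : b - a ≠ 0 := (sub_pos.mpr hab).ne'
  field_simp
  ring

/-- the Fisher information of the triangular family on `[a,b]`
at `m ∈ (a,b)` equals `1/((m-a)(b-m))`. -/
theorem fisher_info_triangular (a b m : ℝ) (hab : a < b) (ham : a < m) (hmb : m < b) :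
    ∫ x in a..b,
        (deriv (fun m' => Real.log (triangularDensity a b m' x)) m) ^ 2
          * triangularDensity a b m x
      = 1 / ((m - a) * (b - m)) :=
  fisher_info_triangular_general a b m ham hmb
end

section
/- For the triangular family on [a,b], the Fisher-Rao distance between parameters m_0, m_1 ∈ (a,b) equals |arcsin((m_1-α)/√β) - arcsin((m_0-α)/√β)|, where α = (a+b)/2 and β = ((a-b)/2)^2. -/
/-! With `c` the midpoint and `r` the half-width of `[a, b]`, one has `(m - a)(b - m) = r² - (m - c)²`,
so `√(i_m) = 1 / √(r² - (m - c)²)`, whose antiderivative on `(a, b)` is `arcsin ((m - c) / r)`. -/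

open Real Set

theorem hasDerivAt_arcsin_sub_div {c r x : ℝ} (hx : x ∈ Ioo (c - r) (c + r)) :
    HasDerivAt (fun y => arcsin ((y - c) / r)) (√(r ^ 2 - (x - c) ^ 2))⁻¹ x := by
  obtain ⟨hlo, hhi⟩ := hx
  have hr : 0 < r := by linarith
  have hu₁ : -1 < (x - c) / r := by rw [lt_div_iff₀ hr]; linarith
  have hu₂ : (x - c) / r < 1 := by rw [div_lt_iff₀ hr]; linarith
  have hinner : HasDerivAt (fun y => (y - c) / r) r⁻¹ x := by
    simpa [div_eq_mul_inv] using ((hasDerivAt_id x).sub_const c).div_const r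
  refine ((hasDerivAt_arcsin hu₁.ne' hu₂.ne).comp x hinner).congr_deriv ?_
  have hscale : r ^ 2 - (x - c) ^ 2 = r ^ 2 * (1 - ((x - c) / r) ^ 2) := by
    field_simp
  rw [hscale, sqrt_mul (by positivity), sqrt_sq hr.le, mul_inv, one_div, mul_comm]

theorem integral_inv_sqrt_sq_sub_sq {c r x₀ x₁ : ℝ} (hx₀ : x₀ ∈ Ioo (c - r) (c + r))
    (hx₁ : x₁ ∈ Ioo (c - r) (c + r)) :
    ∫ x in x₀..x₁, (√(r ^ 2 - (x - c) ^ 2))⁻¹ =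
      arcsin ((x₁ - c) / r) - arcsin ((x₀ - c) / r) := by
  have hsub : uIcc x₀ x₁ ⊆ Ioo (c - r) (c + r) := ordConnected_Ioo.uIcc_subset hx₀ hx₁
  have hderiv (x : ℝ) (hx : x ∈ uIcc x₀ x₁) := hasDerivAt_arcsin_sub_div (hsub hx)
  refine intervalIntegral.integral_eq_sub_of_hasDerivAt hderiv ?_
  refine (ContinuousOn.inv₀ (by fun_prop) fun x hx => ?_).intervalIntegrable
  obtain ⟨hlo, hhi⟩ := hsub hx
  have : 0 < r ^ 2 - (x - c) ^ 2 := by nlinarith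
  positivity

theorem fisherRao_dist_triangular_general (a b m₀ m₁ : ℝ)
    (hm₀ : m₀ ∈ Set.Ioo a b) (hm₁ : m₁ ∈ Set.Ioo a b) :
    |∫ m in m₀..m₁, Real.sqrt (1 / ((m - a) * (b - m)))| =
      |Real.arcsin ((m₁ - (a + b) / 2) / Real.sqrt (((a - b) / 2) ^ 2))
        - Real.arcsin ((m₀ - (a + b) / 2) / Real.sqrt (((a - b) / 2) ^ 2))| := by
  have hab : a < b := hm₀.1.trans hm₀.2
  have hradius : √(((a - b) / 2) ^ 2) = (b - a) / 2 := by
    rw [sqrt_sq_eq_abs, abs_of_neg (by linarith)]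
    ring
  have hintegrand (m : ℝ) : √(1 / ((m - a) * (b - m))) =
      (√(((b - a) / 2) ^ 2 - (m - (a + b) / 2) ^ 2))⁻¹ := by
    rw [one_div, sqrt_inv]
    ring_nf
  have hIoo : Ioo a b = Ioo ((a + b) / 2 - (b - a) / 2) ((a + b) / 2 + (b - a) / 2) := by
    congr 1 <;> ring
  rw [hradius, ← integral_inv_sqrt_sq_sub_sq (hIoo ▸ hm₀) (hIoo ▸ hm₁)]
  simp only [hintegrand]

/-- the Fisher-Rao distance in the triangular family on `[a,b]`,
given by `|∫_{m₀}^{m₁} √(i_m) dm|` with `i_m = 1/((m-a)(b-m))`, equals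
`|arcsin((m₁-α)/√β) - arcsin((m₀-α)/√β)|` with `α = (a+b)/2`, `β = ((a-b)/2)²`. -/
theorem fisherRao_dist_triangular (a b m₀ m₁ : ℝ) (hab : a < b)
    (hm₀ : m₀ ∈ Set.Ioo a b) (hm₁ : m₁ ∈ Set.Ioo a b) :
    |∫ m in m₀..m₁, Real.sqrt (1 / ((m - a) * (b - m)))| =
      |Real.arcsin ((m₁ - (a + b) / 2) / Real.sqrt (((a - b) / 2) ^ 2))
        - Real.arcsin ((m₀ - (a + b) / 2) / Real.sqrt (((a - b) / 2) ^ 2))| :=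
  fisherRao_dist_triangular_general a b m₀ m₁ hm₀ hm₁
end
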